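/- arXiv:2005.00976 — 2 statements merged into one kernel-verified Lean document; each statement's English description precedes it below -/
import Mathlib

section
/- Let A and B be real matrices with the same number of rows (A with column index set n₁, B with column index set n₂). Then the trace norm of the horizontal concatenation [A, B] is at most the sum of the trace norms: ‖[A, B]‖_* ≤ ‖A‖_* + ‖B‖_*. -/
open Matrix

section

open scoped ComplexOrder

/-- The square root of a positive semidefinite matrix, as defined in the older Mathlib
(`Matrix.PosSemidef.sqrt`, since removed). -/
noncomputable def Matrix.PosSemidef.sqrt {n 𝕜 : Type*} [Fintype n] [DecidableEq n] [RCLike 𝕜]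
    {A : Matrix n n 𝕜} (hA : A.PosSemidef) : Matrix n n 𝕜 :=
  hA.1.eigenvectorUnitary.1 * diagonal ((↑) ∘ (Real.sqrt ∘ hA.1.eigenvalues)) *
  (star hA.1.eigenvectorUnitary : Matrix n n 𝕜)

end

/-- The trace norm (nuclear norm) of a real matrix `A`: the trace of the
positive semidefinite square root of `Aᵀ * A`. -/
noncomputable def traceNorm {m n : Type*} [Fintype m] [Fintype n] [DecidableEq n]
    (A : Matrix m n ℝ) : ℝ :=
  (Matrix.posSemidef_conjTranspose_mul_self A).sqrt.trace

namespace TN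
section herm
variable {n : Type*} [Fintype n] [DecidableEq n] {A : Matrix n n ℝ} (hA : A.IsHermitian)


lemma ofReal_id : (RCLike.ofReal : ℝ → ℝ) = id := by ext x; simp

lemma Rcfc_mul (f g : ℝ → ℝ) : hA.cfc f * hA.cfc g = hA.cfc (fun x => f x * g x) := by
  simp only [Matrix.IsHermitian.cfc, Unitary.conjStarAlgAut_apply, Unitary.coe_star, ofReal_id]
  simp only [Matrix.mul_assoc]
  rw [← Matrix.mul_assoc (star (hA.eigenvectorUnitary : Matrix n n ℝ)) (hA.eigenvectorUnitary : Matrix n n ℝ),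
    Unitary.coe_star_mul_self]
  simp only [Matrix.one_mul, ← Matrix.mul_assoc, Matrix.diagonal_mul_diagonal]
  rfl

lemma Rcfc_id : hA.cfc id = A := by
  simpa [Matrix.IsHermitian.cfc, ofReal_id, Function.comp_def] using hA.spectral_theorem.symm

lemma Rcfc_one : hA.cfc (fun _ => 1) = 1 := by
  have : (diagonal (RCLike.ofReal ∘ (fun _ : ℝ => (1:ℝ)) ∘ hA.eigenvalues) : Matrix n n ℝ) = 1 := by
    ext i j; by_cases h : i = j <;> simp [Matrix.diagonal_apply, h, Matrix.one_apply]
  rw [Matrix.IsHermitian.cfc, Unitary.conjStarAlgAut_apply, this, Matrix.mul_one,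
    (Matrix.mem_unitaryGroup_iff).mp hA.eigenvectorUnitary.2]

lemma Rcfc_congr {f g : ℝ → ℝ} (h : ∀ i, f (hA.eigenvalues i) = g (hA.eigenvalues i)) :
    hA.cfc f = hA.cfc g := by
  have : (RCLike.ofReal ∘ f ∘ hA.eigenvalues : n → ℝ) = RCLike.ofReal ∘ g ∘ hA.eigenvalues :=
    funext fun i => by simp [h i]
  rw [Matrix.IsHermitian.cfc, Matrix.IsHermitian.cfc, this]

lemma Rcfc_trace (f : ℝ → ℝ) : (hA.cfc f).trace = ∑ i, f (hA.eigenvalues i) := by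
  rw [Matrix.IsHermitian.cfc, Unitary.conjStarAlgAut_apply, Matrix.mul_assoc, Matrix.trace_mul_comm, Matrix.mul_assoc,
    Unitary.coe_star_mul_self, Matrix.mul_one, Matrix.trace_diagonal]
  simp [ofReal_id]

lemma Rcfc_posSemidef {f : ℝ → ℝ} (h : ∀ x, 0 ≤ f x) : (hA.cfc f).PosSemidef := by
  rw [Matrix.IsHermitian.cfc]
  exact Matrix.PosSemidef.mul_mul_conjTranspose_same
    (Matrix.posSemidef_diagonal_iff.mpr (fun i => by simpa [ofReal_id] using h _)) _

lemma Rcfc_conjTranspose {f : ℝ → ℝ} (h : ∀ x, 0 ≤ f x) : (hA.cfc f)ᴴ = hA.cfc f :=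
  (Rcfc_posSemidef hA h).1




lemma Rcfc_zero : hA.cfc (fun _ => 0) = 0 := by
  have : (diagonal (RCLike.ofReal ∘ (fun _ : ℝ => (0:ℝ)) ∘ hA.eigenvalues) : Matrix n n ℝ) = 0 := by
    ext i j; by_cases h : i = j <;> simp [Matrix.diagonal_apply, h]
  rw [Matrix.IsHermitian.cfc, Unitary.conjStarAlgAut_apply, this, Matrix.mul_zero, Matrix.zero_mul]

lemma Rcfc_sub (f g : ℝ → ℝ) : hA.cfc f - hA.cfc g = hA.cfc (fun x => f x - g x) := by
  have : (diagonal (RCLike.ofReal ∘ f ∘ hA.eigenvalues) : Matrix n n ℝ)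
      - diagonal (RCLike.ofReal ∘ g ∘ hA.eigenvalues)
      = diagonal (RCLike.ofReal ∘ (fun x => f x - g x) ∘ hA.eigenvalues) := by
    ext i j; by_cases h : i = j <;> simp [Matrix.diagonal_apply, h]
  rw [Matrix.IsHermitian.cfc, Matrix.IsHermitian.cfc, Matrix.IsHermitian.cfc]
  simp only [Unitary.conjStarAlgAut_apply]
  rw [← Matrix.sub_mul, ← Matrix.mul_sub, this]

lemma Rcfc_mul_self (f : ℝ → ℝ) : hA.cfc f * A = hA.cfc (fun x => f x * x) := by
  have h := Rcfc_mul hA f id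
  rw [Rcfc_id hA] at h
  exact h

lemma self_mul_Rcfc (f : ℝ → ℝ) : A * hA.cfc f = hA.cfc (fun x => x * f x) := by
  have h := Rcfc_mul hA id f
  rw [Rcfc_id hA] at h
  exact h

lemma Rcfc_conj_self (f h : ℝ → ℝ) :
    hA.cfc f * A * hA.cfc h = hA.cfc (fun x => f x * x * h x) := by
  rw [Rcfc_mul_self hA f, Rcfc_mul]

end herm


/-- the "inverse square root" function, with value 0 at nonpositive reals -/
noncomputable def g : ℝ → ℝ := fun x => x⁻¹ * Real.sqrt x

lemma sqrt_nonpos {x : ℝ} (h : x ≤ 0) : Real.sqrt x = 0 := by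
  rcases eq_or_lt_of_le h with h | h
  · subst h; exact Real.sqrt_zero
  · exact Real.sqrt_eq_zero_of_nonpos h.le

lemma g_nonneg (x : ℝ) : 0 ≤ g x := by
  rcases le_or_gt x 0 with h | h
  · simp [g, sqrt_nonpos h]
  · exact mul_nonneg (by positivity) (Real.sqrt_nonneg x)

lemma g_mul_id (x : ℝ) : g x * x = Real.sqrt x := by
  rcases eq_or_ne x 0 with rfl | h
  · simp [g]
  · rw [g, mul_comm (x⁻¹) _, mul_assoc, inv_mul_cancel₀ h, mul_one]

/-- e = g * sqrt, takes values in [0,1] -/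
noncomputable def e : ℝ → ℝ := fun x => g x * Real.sqrt x

lemma e_nonneg (x : ℝ) : 0 ≤ e x := mul_nonneg (g_nonneg x) (Real.sqrt_nonneg x)

lemma e_le_one (x : ℝ) : e x ≤ 1 := by
  rcases le_or_gt x 0 with h | h
  · simp [e, sqrt_nonpos h]
  · have : Real.sqrt x * Real.sqrt x = x := Real.mul_self_sqrt h.le
    simp only [e, g]
    rw [mul_assoc, this]
    rw [inv_mul_cancel₀ h.ne']

lemma e_eq (x : ℝ) : e x = g x * x * g x := by
  rw [e, ← g_mul_id x]; ring

lemma id_mul_one_sub_e {x : ℝ} (h : 0 ≤ x) : x * (1 - e x) = 0 := by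
  rcases eq_or_lt_of_le h with h | h
  · simp [← h]
  · have : e x = 1 := by
      simp only [e, g, mul_assoc, Real.mul_self_sqrt h.le]
      rw [inv_mul_cancel₀ h.ne']
    simp [this]


section polar
variable {m k : Type*} [Fintype m] [Fintype k] [DecidableEq k] (M : Matrix m k ℝ)

lemma quad (X : Matrix m k ℝ) (v : k → ℝ) :
    (X *ᵥ v) ⬝ᵥ (X *ᵥ v) = v ⬝ᵥ ((Xᴴ * X) *ᵥ v) := by
  rw [← Matrix.mulVec_mulVec]
  conv_rhs => rw [Matrix.dotProduct_mulVec, Matrix.vecMul_conjTranspose]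
  simp

lemma polar_conj_mul :
    (M * (Matrix.posSemidef_conjTranspose_mul_self M).1.cfc g)ᴴ * M
      = (Matrix.posSemidef_conjTranspose_mul_self M).sqrt := by
  set hH := (Matrix.posSemidef_conjTranspose_mul_self M).1 with hHdef
  have h1 : (M * hH.cfc g)ᴴ * M = hH.cfc g * (Mᴴ * M) := by
    rw [Matrix.conjTranspose_mul, Rcfc_conjTranspose hH g_nonneg, Matrix.mul_assoc]
  rw [h1, Rcfc_mul_self]
  have h2 : (fun x => g x * x) = Real.sqrt := funext fun x => g_mul_id x
  rw [h2]
  rfl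

lemma mul_cfc_e :
    M * (Matrix.posSemidef_conjTranspose_mul_self M).1.cfc e = M := by
  set hP := Matrix.posSemidef_conjTranspose_mul_self M with hPdef
  set hH := hP.1 with hHdef
  set N := hH.cfc (fun x => 1 - e x) with hNdef
  have hPN : (Mᴴ * M) * N = 0 := by
    rw [hNdef, self_mul_Rcfc]
    have hswap : hH.cfc (fun x => x * (1 - e x)) = hH.cfc (fun x => id x * (1 - e x)) := rfl
    rw [hswap]
    have h0 : hH.cfc (fun x => id x * (1 - e x)) = hH.cfc (fun _ => 0) :=
      Rcfc_congr hH (fun i => id_mul_one_sub_e (hP.eigenvalues_nonneg i))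
    rw [h0, Rcfc_zero]
  have hMN : M * N = 0 := by
    rw [← Matrix.conjTranspose_mul_self_eq_zero (A := M * N)]
    calc (M * N)ᴴ * (M * N) = Nᴴ * ((Mᴴ * M) * N) := by
          rw [Matrix.conjTranspose_mul]; rw [Matrix.mul_assoc, Matrix.mul_assoc]
      _ = 0 := by rw [hPN, Matrix.mul_zero]
  have hsplit : hH.cfc e = hH.cfc (fun _ => 1) - N := by
    rw [hNdef, Rcfc_sub]
    exact (Rcfc_congr hH (fun i => by ring)).symm
  rw [hsplit, Rcfc_one, Matrix.mul_sub, hMN, Matrix.mul_one, sub_zero]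

lemma polar_contraction (v : k → ℝ) :
    ((M * (Matrix.posSemidef_conjTranspose_mul_self M).1.cfc g) *ᵥ v) ⬝ᵥ
      ((M * (Matrix.posSemidef_conjTranspose_mul_self M).1.cfc g) *ᵥ v) ≤ v ⬝ᵥ v := by
  set hP := Matrix.posSemidef_conjTranspose_mul_self M with hPdef
  set hH := hP.1 with hHdef
  set W := M * hH.cfc g with hWdef
  have hWW : Wᴴ * W = hH.cfc e := by
    rw [hWdef, Matrix.conjTranspose_mul, Rcfc_conjTranspose hH g_nonneg]
    calc hH.cfc g * Mᴴ * (M * hH.cfc g) = hH.cfc g * (Mᴴ * M) * hH.cfc g := by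
          rw [Matrix.mul_assoc, Matrix.mul_assoc, Matrix.mul_assoc]
      _ = hH.cfc e := by
          rw [Rcfc_conj_self]
          exact Rcfc_congr hH (fun i => (e_eq _).symm)
  have hpsd : (1 - Wᴴ * W).PosSemidef := by
    rw [hWW, ← Rcfc_one hH, Rcfc_sub]
    exact Rcfc_posSemidef hH (fun x => sub_nonneg.mpr (e_le_one x))
  have h2 := hpsd.dotProduct_mulVec_nonneg v
  rw [quad]
  have hv : star v = v := by simp
  rw [hv] at h2
  have hexp : v ⬝ᵥ ((1 - Wᴴ * W) *ᵥ v) = v ⬝ᵥ v - v ⬝ᵥ ((Wᴴ * W) *ᵥ v) := by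
    rw [Matrix.sub_mulVec, dotProduct_sub, Matrix.one_mulVec]
  rw [hexp] at h2
  linarith

lemma dot_le_one {c d : m → ℝ} (hc : c ⬝ᵥ c ≤ 1) (hd : d ⬝ᵥ d ≤ 1)
    (hc0 : 0 ≤ c ⬝ᵥ c) (hd0 : 0 ≤ d ⬝ᵥ d) : c ⬝ᵥ d ≤ 1 := by
  have hcs := Finset.sum_mul_sq_le_sq_mul_sq Finset.univ c d
  simp only [dotProduct] at *
  have h1 : (∑ j, c j * d j) ^ 2 ≤ 1 := by
    calc (∑ j, c j * d j) ^ 2 ≤ (∑ j, c j ^ 2) * ∑ j, d j ^ 2 := hcs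
      _ ≤ 1 * 1 := by
          apply mul_le_mul _ _ _ zero_le_one
          · simpa [sq] using hc
          · simpa [sq] using hd
          · simpa [sq] using hd0
      _ = 1 := one_mul 1
  nlinarith [sq_nonneg (∑ j, c j * d j)]

lemma trace_le_traceNorm (A V : Matrix m k ℝ)
    (hV : ∀ v : k → ℝ, (V *ᵥ v) ⬝ᵥ (V *ᵥ v) ≤ v ⬝ᵥ v) :
    (Vᴴ * A).trace ≤ traceNorm A := by
  set hP := Matrix.posSemidef_conjTranspose_mul_self A with hPdef
  set hH := hP.1 with hHdef
  set VA := A * hH.cfc g with hVAdef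
  set U : Matrix k k ℝ := hH.eigenvectorUnitary.1 with hUdef
  set lam := hH.eigenvalues with hlamdef
  have hVA : ∀ v : k → ℝ, (VA *ᵥ v) ⬝ᵥ (VA *ᵥ v) ≤ v ⬝ᵥ v := polar_contraction A
  -- A = VA * sqrt
  have hA_eq : VA * hP.sqrt = A := by
    have h1 : hP.sqrt = hH.cfc Real.sqrt := rfl
    have h2 : VA * hH.cfc Real.sqrt = A * (hH.cfc g * hH.cfc Real.sqrt) := by
      rw [hVAdef, Matrix.mul_assoc]
    rw [h1, h2, Rcfc_mul]
    exact mul_cfc_e A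
  -- unitarity of U
  have hUU : Uᴴ * U = 1 := by
    have h := Unitary.coe_star_mul_self hH.eigenvectorUnitary
    rwa [Matrix.star_eq_conjTranspose] at h
  -- columns of U are unit vectors
  have hcol : ∀ i, (fun t => U t i) ⬝ᵥ (fun t => U t i) = 1 := by
    intro i
    have : (Uᴴ * U) i i = 1 := by rw [hUU, Matrix.one_apply_eq]
    rw [← this]
    simp [Matrix.mul_apply, Matrix.conjTranspose_apply, dotProduct]
  -- the sqrt matrix as U * D * Uᴴ
  have hsqrt : hP.sqrt = U * diagonal (RCLike.ofReal ∘ Real.sqrt ∘ lam) * Uᴴ := rfl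
  -- trace identity
  have htr : (Vᴴ * A).trace
      = ∑ i, ((V * U)ᴴ * (VA * U)) i i * Real.sqrt (lam i) := by
    conv_lhs => rw [← hA_eq, hsqrt]
    have h3 : Vᴴ * (VA * (U * diagonal (RCLike.ofReal ∘ Real.sqrt ∘ lam) * Uᴴ))
        = (Vᴴ * VA * U * diagonal (RCLike.ofReal ∘ Real.sqrt ∘ lam)) * Uᴴ := by
      simp only [Matrix.mul_assoc]
    rw [h3, Matrix.trace_mul_comm]
    have h4 : Uᴴ * (Vᴴ * VA * U * diagonal (RCLike.ofReal ∘ Real.sqrt ∘ lam))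
        = ((V * U)ᴴ * (VA * U)) * diagonal (RCLike.ofReal ∘ Real.sqrt ∘ lam) := by
      simp only [Matrix.conjTranspose_mul, Matrix.mul_assoc]
    rw [h4, Matrix.trace]
    congr 1
    ext i
    rw [Matrix.diag_apply, Matrix.mul_diagonal]
    simp [ofReal_id]
  rw [htr]
  -- traceNorm as sum of sqrt of eigenvalues
  have htn : traceNorm A = ∑ i, Real.sqrt (lam i) := by
    have : hP.sqrt = hH.cfc Real.sqrt := rfl
    rw [traceNorm]; show hP.sqrt.trace = _; rw [this, Rcfc_trace]
  rw [htn]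
  apply Finset.sum_le_sum
  intro i _
  have hdiag : ((V * U)ᴴ * (VA * U)) i i
      = (fun j => (V *ᵥ fun t => U t i) j) ⬝ᵥ (fun j => (VA *ᵥ fun t => U t i) j) := by
    simp only [Matrix.mul_apply, Matrix.conjTranspose_apply, dotProduct, Matrix.mulVec,
      Finset.mul_sum, Finset.sum_mul, star_trivial]
    try (congr 1; ext x; congr 1; ext y; congr 1; ext z; ring)
  have hc : (V *ᵥ fun t => U t i) ⬝ᵥ (V *ᵥ fun t => U t i) ≤ 1 :=
    le_trans (hV _) (le_of_eq (hcol i))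
  have hd : (VA *ᵥ fun t => U t i) ⬝ᵥ (VA *ᵥ fun t => U t i) ≤ 1 :=
    le_trans (hVA _) (le_of_eq (hcol i))
  have hbound : ((V * U)ᴴ * (VA * U)) i i ≤ 1 := by
    rw [hdiag]
    have hc0 : (0:ℝ) ≤ (V *ᵥ fun t => U t i) ⬝ᵥ (V *ᵥ fun t => U t i) := by
      simpa using dotProduct_star_self_nonneg (V *ᵥ fun t => U t i)
    have hd0 : (0:ℝ) ≤ (VA *ᵥ fun t => U t i) ⬝ᵥ (VA *ᵥ fun t => U t i) := by
      simpa using dotProduct_star_self_nonneg (VA *ᵥ fun t => U t i)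
    exact dot_le_one hc hd hc0 hd0
  calc ((V * U)ᴴ * (VA * U)) i i * Real.sqrt (lam i)
      ≤ 1 * Real.sqrt (lam i) :=
        mul_le_mul_of_nonneg_right hbound (Real.sqrt_nonneg _)
    _ = Real.sqrt (lam i) := one_mul _

end polar
end TN


open TN in
/-- The trace norm of a horizontal concatenation `[A, B]` is at most the sum of
the trace norms of `A` and `B`. -/
theorem traceNorm_fromColumns_le {m n₁ n₂ : Type*} [Fintype m]
    [Fintype n₁] [DecidableEq n₁] [Fintype n₂] [DecidableEq n₂]
    (A : Matrix m n₁ ℝ) (B : Matrix m n₂ ℝ) :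
    traceNorm (Matrix.fromCols A B) ≤ traceNorm A + traceNorm B := by
  set M := Matrix.fromCols A B with hMdef
  set hP := Matrix.posSemidef_conjTranspose_mul_self M with hPdef
  set hH := hP.1 with hHdef
  set W := M * hH.cfc g with hWdef
  have hWM : Wᴴ * M = hP.sqrt := polar_conj_mul M
  have htrace : traceNorm M = (Wᴴ * M).trace := by
    rw [hWM, traceNorm]
  set W₁ : Matrix m n₁ ℝ := Matrix.of (fun i j => W i (Sum.inl j)) with hW1def
  set W₂ : Matrix m n₂ ℝ := Matrix.of (fun i j => W i (Sum.inr j)) with hW2def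
  have hsplit : (Wᴴ * M).trace = (W₁ᴴ * A).trace + (W₂ᴴ * B).trace := by
    simp only [Matrix.trace, Matrix.diag_apply, Matrix.mul_apply,
      Matrix.conjTranspose_apply, star_trivial]
    rw [Fintype.sum_sum_type]
    simp only [hMdef, Matrix.fromCols_apply_inl, Matrix.fromCols_apply_inr, hW1def,
      hW2def, Matrix.of_apply]
  have hW1c : ∀ v : n₁ → ℝ, (W₁ *ᵥ v) ⬝ᵥ (W₁ *ᵥ v) ≤ v ⬝ᵥ v := by
    intro v
    have h1 : W₁ *ᵥ v = W *ᵥ Sum.elim v 0 := by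
      ext i
      simp [Matrix.mulVec, dotProduct, Fintype.sum_sum_type, hW1def]
    have h2 : (Sum.elim v (0 : n₂ → ℝ)) ⬝ᵥ Sum.elim v 0 = v ⬝ᵥ v := by
      simp [dotProduct, Fintype.sum_sum_type]
    rw [h1]
    exact le_trans (polar_contraction M (Sum.elim v 0)) (le_of_eq h2)
  have hW2c : ∀ v : n₂ → ℝ, (W₂ *ᵥ v) ⬝ᵥ (W₂ *ᵥ v) ≤ v ⬝ᵥ v := by
    intro v
    have h1 : W₂ *ᵥ v = W *ᵥ Sum.elim 0 v := by
      ext i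
      simp [Matrix.mulVec, dotProduct, Fintype.sum_sum_type, hW2def]
    have h2 : (Sum.elim (0 : n₁ → ℝ) v) ⬝ᵥ Sum.elim 0 v = v ⬝ᵥ v := by
      simp [dotProduct, Fintype.sum_sum_type]
    rw [h1]
    exact le_trans (polar_contraction M (Sum.elim 0 v)) (le_of_eq h2)
  calc traceNorm M = (W₁ᴴ * A).trace + (W₂ᴴ * B).trace := by rw [htrace, hsplit]
    _ ≤ traceNorm A + traceNorm B :=
        add_le_add (trace_le_traceNorm A W₁ hW1c) (trace_le_traceNorm B W₂ hW2c)
end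

section
/- (CCCP descent, Lemma 2.) Let E be a real inner product space (e.g., ℝ^d or a finite-dimensional real matrix space with the trace inner product), and let J_cvx : E → ℝ be convex and differentiable and J_cav : E → ℝ be concave and differentiable. Define J = J_cvx + J_cav. If x, y ∈ E satisfy the CCCP update condition ∇J_cvx(y) = −∇J_cav(x), then J(y) ≤ J(x); i.e., the CCCP iteration monotonically decreases the objective J. -/
open InnerProductSpace

lemma convex_gradient_ineq {E : Type*} [NormedAddCommGroup E] [InnerProductSpace ℝ E] [CompleteSpace E]
    (f : E → ℝ) (g : E) (x y : E) (hcvx : ConvexOn ℝ Set.univ f)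
    (hg : HasGradientAt f g y) :
    f y + ⟪g, x - y⟫_ℝ ≤ f x := by
  set φ : ℝ → ℝ := fun t => f (AffineMap.lineMap y x t) with hφ
  have hφcvx : ConvexOn ℝ Set.univ φ := by
    have := hcvx.comp_affineMap (AffineMap.lineMap y x : ℝ →ᵃ[ℝ] E)
    simp only [Set.preimage_univ] at this
    exact this
  have hline : HasDerivAt (fun t : ℝ => (AffineMap.lineMap y x t : E)) (x - y) 0 := by
    have heq : (fun t : ℝ => (AffineMap.lineMap y x t : E)) = fun t => t • (x - y) + y := by
      ext t; simp [AffineMap.lineMap_apply_module]; module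
    rw [heq]
    have : HasDerivAt (fun t : ℝ => t • (x - y) + y) ((1 : ℝ) • (x - y)) 0 :=
      ((hasDerivAt_id 0).smul_const (x - y)).add_const y
    simpa using this
  have hderiv : HasDerivAt φ ⟪g, x - y⟫_ℝ 0 := by
    have hf : HasFDerivAt f (toDual ℝ E g) y := hg.hasFDerivAt
    have hf' : HasFDerivAt f (toDual ℝ E g) ((AffineMap.lineMap y x) (0:ℝ)) := by
      simpa using hf
    have := hf'.comp_hasDerivAt 0 (by simpa using hline)
    simp only [toDual_apply_apply] at this
    exact this
  have := hφcvx.le_slope_of_hasDerivAt (Set.mem_univ 0) (Set.mem_univ 1)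
    one_pos hderiv
  have hslope : slope φ 0 1 = φ 1 - φ 0 := by simp [slope_def_field]
  rw [hslope] at this
  have h0 : φ 0 = f y := by simp [hφ]
  have h1 : φ 1 = f x := by simp [hφ]
  rw [h0, h1] at this
  linarith

/-- CCCP descent (Lemma 2): if `Jcvx` is convex and differentiable with gradient
`gcvx`, `Jcav` is concave and differentiable with gradient `gcav`, and the CCCP
update condition `∇Jcvx(y) = −∇Jcav(x)` holds, then the CCCP iteration
monotonically decreases the objective `J = Jcvx + Jcav`: `J(y) ≤ J(x)`. -/
theorem cccp_descent {E : Type*} [NormedAddCommGroup E] [InnerProductSpace ℝ E] [CompleteSpace E]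
    (Jcvx Jcav : E → ℝ) (gcvx gcav : E → E)
    (hcvx : ConvexOn ℝ Set.univ Jcvx)
    (hcav : ConcaveOn ℝ Set.univ Jcav)
    (hgcvx : ∀ z : E, HasGradientAt Jcvx (gcvx z) z)
    (hgcav : ∀ z : E, HasGradientAt Jcav (gcav z) z)
    (x y : E) (hupdate : gcvx y = -gcav x) :
    Jcvx y + Jcav y ≤ Jcvx x + Jcav x := by
  have h1 : Jcvx y + ⟪gcvx y, x - y⟫_ℝ ≤ Jcvx x :=
    convex_gradient_ineq Jcvx (gcvx y) x y hcvx (hgcvx y)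
  have h2 : (-Jcav) x + ⟪-gcav x, y - x⟫_ℝ ≤ (-Jcav) y := by
    refine convex_gradient_ineq (-Jcav) (-gcav x) y x hcav.neg ?_
    have h := (hgcav x).neg
    have : HasGradientAt (fun z => -Jcav z) (-gcav x) x := by
      unfold HasGradientAt HasGradientAtFilter
      rw [map_neg]
      exact h
    exact this
  have e1 : ⟪gcvx y, x - y⟫_ℝ = ⟪-gcav x, x - y⟫_ℝ := by rw [hupdate]
  have e2 : ⟪-gcav x, y - x⟫_ℝ = -⟪-gcav x, x - y⟫_ℝ := by
    rw [← inner_neg_right]; congr 1; abel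
  simp only [Pi.neg_apply] at h2
  rw [e1] at h1
  rw [e2] at h2
  linarith
end
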